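/- Suppose ζ = S X with S ∈ ℝ^{M×n} of rank n and X ∈ ℝ^{n×N} of rank n, and let ζ = U₁ Σ₁ V₁^T be a compact (rank-n) SVD of ζ. Then there exists an invertible matrix T ∈ ℝ^{n×n} such that U₁ Σ₁^{1/2} = S T, i.e. the truncated SVD recovers S up to an invertible similarity transform. -/
import Mathlib


open Matrix

/-- the truncated SVD of ζ = S X recovers S up to an invertible
similarity transform: U₁ Σ₁^{1/2} = S T for some invertible T. -/
theorem svd_recovers_up_to_similarity
    (M n N : ℕ)
    (S : Matrix (Fin M) (Fin n) ℝ) (X : Matrix (Fin n) (Fin N) ℝ)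
    (hS : S.rank = n) (hX : X.rank = n)
    (ζ : Matrix (Fin M) (Fin N) ℝ) (hζ : ζ = S * X)
    (U₁ : Matrix (Fin M) (Fin n) ℝ) (V₁ : Matrix (Fin N) (Fin n) ℝ)
    (d : Fin n → ℝ) (hd : ∀ i, 0 < d i)
    (hU₁ : U₁ᵀ * U₁ = 1) (hV₁ : V₁ᵀ * V₁ = 1)
    (hsvd : ζ = U₁ * Matrix.diagonal d * V₁ᵀ) :
    ∃ T : Matrix (Fin n) (Fin n) ℝ, IsUnit T.det ∧
      U₁ * Matrix.diagonal (fun i => Real.sqrt (d i)) = S * T := by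
  set Y : Matrix (Fin n) (Fin n) ℝ := X * V₁ with hY
  have hSY : S * Y = U₁ * Matrix.diagonal d := by
    have : (S * X) * V₁ = (U₁ * Matrix.diagonal d * V₁ᵀ) * V₁ := by
      rw [← hζ, hsvd]
    calc S * Y = (S * X) * V₁ := by rw [hY, Matrix.mul_assoc]
      _ = U₁ * Matrix.diagonal d * (V₁ᵀ * V₁) := by rw [this, Matrix.mul_assoc]
      _ = U₁ * Matrix.diagonal d := by rw [hV₁, Matrix.mul_one]
  have hkey : (U₁ᵀ * S) * Y = Matrix.diagonal d := by
    rw [Matrix.mul_assoc, hSY, ← Matrix.mul_assoc, hU₁, Matrix.one_mul]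
  have hdetY : Y.det ≠ 0 := by
    intro h
    have := congrArg Matrix.det hkey
    rw [Matrix.det_mul, h, mul_zero, Matrix.det_diagonal] at this
    exact (Finset.prod_pos (fun i _ => hd i)).ne' this.symm
  refine ⟨Y * Matrix.diagonal (fun i => (Real.sqrt (d i))⁻¹), ?_, ?_⟩
  · rw [Matrix.det_mul, Matrix.det_diagonal]
    refine (isUnit_iff_ne_zero.mpr hdetY).mul (isUnit_iff_ne_zero.mpr ?_)
    exact Finset.prod_ne_zero_iff.mpr fun i _ =>
      inv_ne_zero (Real.sqrt_pos.mpr (hd i)).ne'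
  · rw [← Matrix.mul_assoc, hSY, Matrix.mul_assoc, Matrix.diagonal_mul_diagonal]
    have hf : (fun i => d i * (Real.sqrt (d i))⁻¹) = fun i => Real.sqrt (d i) := by
      funext i
      rw [inv_eq_one_div, mul_one_div,
        div_eq_iff (Real.sqrt_pos.mpr (hd i)).ne']
      exact (Real.mul_self_sqrt (hd i).le).symm
    rw [hf]
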